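/- arXiv:1407.7201 — 3 statements merged into one kernel-verified Lean document; each statement's English description precedes it below -/
import Mathlib

section
/- Let n ≥ 1 and work in the polynomial ring 𝔽₂[t, t₁, …, t_{2n}]. Substituting t_i ↦ t + t_i for i = 1,…,2n and t_{2n+1} ↦ t, where t = t₁ + ⋯ + t_{2n}, into the second elementary symmetric polynomial σ₂(t₁,…,t_{2n+1}) yields n·σ₁(t₁,…,t_{2n})² + σ₂(t₁,…,t_{2n}) (coefficients mod 2). -/
open MvPolynomial

section Aux

variable {R : Type*} [CommSemiring R]

lemma aux_esymm_cons (a : R) (s : Multiset R) (k : ℕ) :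
    (a ::ₘ s).esymm (k + 1) = s.esymm (k + 1) + a * s.esymm k := by
  simp only [Multiset.esymm, Multiset.powersetCard_cons, Multiset.map_add, Multiset.sum_add,
    Multiset.map_map, Function.comp_def, Multiset.prod_cons]
  rw [Multiset.sum_map_mul_left]

lemma aux_esymm_zero (s : Multiset R) : s.esymm 0 = 1 := by
  simp [Multiset.esymm, Multiset.powersetCard_zero_left]

lemma aux_esymm_one (s : Multiset R) : s.esymm 1 = s.sum := by
  simp [Multiset.esymm, Multiset.powersetCard_one, Multiset.map_map]

lemma aux_esymm_cons_two (a : R) (s : Multiset R) :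
    (a ::ₘ s).esymm 2 = s.esymm 2 + a * s.sum := by
  have h := aux_esymm_cons a s 1
  rw [aux_esymm_one] at h
  exact h

lemma aux_sum_map_add_const (a : R) (s : Multiset R) :
    (s.map (fun x => a + x)).sum = Multiset.card s • a + s.sum := by
  induction s using Multiset.induction with
  | empty => simp
  | cons b t ih =>
      simp only [Multiset.map_cons, Multiset.sum_cons, ih, Multiset.card_cons, succ_nsmul]
      ring

lemma aux_choose_succ_two (k : ℕ) : (k + 1).choose 2 = k.choose 2 + k := by
  rw [show (2:ℕ) = 1+1 from rfl, Nat.choose_succ_succ, Nat.choose_one_right, Nat.add_comm]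

lemma aux_esymm_two_shift {R : Type*} [CommRing R] (a : R) (s : Multiset R) :
    (s.map (fun x => a + x)).esymm 2 + a * s.sum
      = s.esymm 2 + Multiset.card s • (a * s.sum)
        + (Multiset.card s).choose 2 • (a * a) := by
  induction s using Multiset.induction with
  | empty => simp [Multiset.esymm]
  | cons b t ih =>
      rw [Multiset.map_cons, aux_esymm_cons_two, aux_esymm_cons_two,
        aux_sum_map_add_const, Multiset.sum_cons, Multiset.card_cons,
        aux_choose_succ_two]
      simp only [add_nsmul, succ_nsmul, smul_add, nsmul_eq_mul] at ih ⊢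
      push_cast at ih ⊢
      linear_combination ih

end Aux

/-- Substituting `tᵢ ↦ t + tᵢ` (for `i = 1, …, 2n`) and `t_{2n+1} ↦ t`, where
`t = t₁ + ⋯ + t_{2n}`, into `σ₂(t₁,…,t_{2n+1})` yields
`n·σ₁(t₁,…,t_{2n})² + σ₂(t₁,…,t_{2n})` over `𝔽₂`. -/
theorem stmt0 (n : ℕ) (hn : 1 ≤ n) :
    (MvPolynomial.aeval (fun i : Fin (2 * n + 1) =>
        if h : (i : ℕ) < 2 * n then
          (∑ j : Fin (2 * n), MvPolynomial.X j) + MvPolynomial.X (⟨i, h⟩ : Fin (2 * n))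
        else (∑ j : Fin (2 * n), MvPolynomial.X j)))
      (MvPolynomial.esymm (Fin (2 * n + 1)) (ZMod 2) 2)
    = n • (MvPolynomial.esymm (Fin (2 * n)) (ZMod 2) 1) ^ 2
        + MvPolynomial.esymm (Fin (2 * n)) (ZMod 2) 2 := by
  classical
  obtain ⟨m, rfl⟩ : ∃ m, n = m + 1 := ⟨n - 1, by omega⟩
  set R := MvPolynomial (Fin (2 * (m+1))) (ZMod 2)
  set t : R := ∑ j : Fin (2 * (m+1)), MvPolynomial.X j with ht
  set φ : Fin (2 * (m+1) + 1) → R := fun i =>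
    if h : (i : ℕ) < 2 * (m+1) then t + MvPolynomial.X (⟨i, h⟩ : Fin (2 * (m+1))) else t with hφ
  rw [MvPolynomial.aeval_esymm_eq_multiset_esymm]
  have huniv : (Finset.univ : Finset (Fin (2 * (m+1) + 1))).val.map φ
      = t ::ₘ ((Finset.univ : Finset (Fin (2 * (m+1)))).val.map X).map (fun x => t + x) := by
    rw [Fin.univ_castSuccEmb, Finset.cons_val, Multiset.map_cons, Finset.map_val,
      Multiset.map_map, Multiset.map_map]
    congr 1
    · simp [hφ]
    · apply Multiset.map_congr rfl
      intro j _
      simp [hφ, Fin.castSuccEmb, Function.comp]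
  rw [huniv, aux_esymm_cons_two]
  have hs : ((Finset.univ : Finset (Fin (2 * (m+1)))).val.map X).sum = t := by
    rw [ht]; rfl
  have hcard : Multiset.card ((Finset.univ : Finset (Fin (2 * (m+1)))).val.map
      (X : Fin (2 * (m+1)) → R)) = 2 * (m + 1) := by simp; omega
  have hshift := aux_esymm_two_shift t ((Finset.univ : Finset (Fin (2 * (m+1)))).val.map X)
  rw [hs, hcard] at hshift
  rw [aux_sum_map_add_const, hs, hcard]
  have he1 : MvPolynomial.esymm (Fin (2 * (m+1))) (ZMod 2) 1 = t := by
    rw [MvPolynomial.esymm_one, ht]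
  have he2 : MvPolynomial.esymm (Fin (2 * (m+1))) (ZMod 2) 2
      = ((Finset.univ : Finset (Fin (2 * (m+1)))).val.map X).esymm 2 := by
    rw [MvPolynomial.esymm_eq_multiset_esymm]
  rw [he1, he2]
  have hchoose : (2 * (m+1)).choose 2 = 2 * m * m + 3 * m + 1 := by
    rw [Nat.choose_two_right]
    have h1 : 2 * (m + 1) - 1 = 2 * m + 1 := by omega
    rw [h1]
    have h2 : 2 * (m + 1) * (2 * m + 1) = (2 * m * m + 3 * m + 1) * 2 := by ring
    rw [h2, Nat.mul_div_cancel]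
    omega
  rw [hchoose] at hshift
  have h2 : (2 : R) = 0 := by
    have := CharP.cast_eq_zero R 2
    exact_mod_cast this
  simp only [nsmul_eq_mul] at hshift ⊢
  push_cast at hshift ⊢
  linear_combination hshift - ((m:R) * m + 2 * m + 1) * t * t * h2 + (2*(m:R)*m + 5*m + 3) * t^2 * h2
end

section
/- Let p be a prime and n ≥ 1 with p ∤ (n+1). Define the ring endomorphism f of ℤ_{(p)}[x₁, …, x_n] by f(x_i) = x_i + c₁ where c₁ = x₁ + ⋯ + x_n. Then f(c₁) = (n+1)·c₁, and f restricts to an automorphism of the subring of symmetric polynomials ℤ_{(p)}[c₁, …, c_n] (c_i the elementary symmetric polynomials); indeed f(c_i) ≡ c_i mod the ideal (c₁) for i > 1, and f is invertible on this subring. -/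
open MvPolynomial

section Aux

variable {n : ℕ} {R : Type*} [CommRing R]

lemma aux_sub_mem (P : MvPolynomial (Fin n) R) :
    aeval (fun i : Fin n => X i + ∑ j : Fin n, X j) P - P ∈
      Ideal.span {∑ j : Fin n, (X j : MvPolynomial (Fin n) R)} := by
  induction P using MvPolynomial.induction_on with
  | C a => simp
  | add p q hp hq =>
    have := Ideal.add_mem _ hp hq
    convert this using 1; rw [map_add]; ring
  | mul_X p i hp =>
    rw [map_mul, aeval_X]
    have h1 : aeval (fun i : Fin n => X i + ∑ j : Fin n, X j) p * (X i + ∑ j : Fin n, X j)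
        - p * X i
        = (aeval (fun i : Fin n => X i + ∑ j : Fin n, X j) p - p) * (X i + ∑ j, X j)
          + p * (∑ j, X j) := by ring
    rw [h1]
    exact Ideal.add_mem _ (Ideal.mul_mem_right _ _ hp)
      (Ideal.mul_mem_left _ _ (Ideal.subset_span rfl))

lemma aux_adjoin_eq (R : Type*) [CommRing R] :
    Algebra.adjoin R ((fun i : ℕ => esymm (Fin n) R i) '' Set.Icc 1 n)
      = symmetricSubalgebra (Fin n) R := by
  have hrange : (fun i : ℕ => esymm (Fin n) R i) '' Set.Icc 1 n
      = Set.range (fun i : Fin n => esymm (Fin n) R ((i : ℕ) + 1)) := by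
    ext q
    constructor
    · rintro ⟨i, ⟨h1, h2⟩, rfl⟩
      exact ⟨⟨i - 1, by omega⟩, by simp; congr 1; omega⟩
    · rintro ⟨i, rfl⟩
      exact ⟨(i : ℕ) + 1, ⟨by omega, by omega⟩, rfl⟩
  rw [hrange, Algebra.adjoin_range_eq_range_aeval]
  ext q
  constructor
  · rintro ⟨P, rfl⟩
    simp only [AlgHom.toRingHom_eq_coe, RingHom.coe_coe]
    rw [← esymmAlgHom_apply]
    exact (esymmAlgHom (Fin n) R n P).2
  · intro hq
    obtain ⟨P, hP⟩ := esymmAlgHom_surjective R (n := n) (σ := Fin n) (by simp) ⟨q, hq⟩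
    exact ⟨P, by simp only [AlgHom.toRingHom_eq_coe, RingHom.coe_coe]; rw [← esymmAlgHom_apply, hP]⟩

lemma aux_aeval_sum (v : R) :
    aeval (fun i : Fin n => X i + C v * ∑ j : Fin n, X j) (∑ j : Fin n, (X j : MvPolynomial (Fin n) R))
      = (∑ j : Fin n, X j) + C ((n : R) * v) * ∑ j : Fin n, X j := by
  rw [map_sum]
  simp only [aeval_X]
  rw [Finset.sum_add_distrib, Finset.sum_const, Finset.card_univ, Fintype.card_fin,
    nsmul_eq_mul, map_mul, C_eq_coe_nat]
  ring

lemma aux_comp (v w : R) (h : v + w + (n : R) * v * w = 0) :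
    (aeval (fun i : Fin n => X i + C w * ∑ j : Fin n, X j)).comp
      (aeval (fun i : Fin n => X i + C v * ∑ j : Fin n, X j))
      = AlgHom.id R (MvPolynomial (Fin n) R) := by
  apply MvPolynomial.algHom_ext
  intro i
  rw [AlgHom.comp_apply, aeval_X, map_add, aeval_X, map_mul, aeval_C, aux_aeval_sum,
    AlgHom.id_apply]
  have : algebraMap R (MvPolynomial (Fin n) R) v = C v := rfl
  rw [this]
  have hC : C w * (∑ j : Fin n, (X j : MvPolynomial (Fin n) R))
      + C v * ((∑ j : Fin n, X j) + C ((n : R) * w) * ∑ j : Fin n, X j)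
      = C (v + w + (n : R) * v * w) * ∑ j : Fin n, X j := by
    simp only [map_add, map_mul]
    ring
  rw [add_assoc, hC, h, map_zero, zero_mul, add_zero]

lemma aux_symm (v : R) {φ : MvPolynomial (Fin n) R} (hφ : φ.IsSymmetric) :
    (aeval (fun i : Fin n => X i + C v * ∑ j : Fin n, X j) φ).IsSymmetric := by
  intro e
  have key : (rename (R := R) e).comp (aeval (fun i : Fin n => X i + C v * ∑ j : Fin n, X j))
      = (aeval (fun i : Fin n => X i + C v * ∑ j : Fin n, X j)).comp (rename e) := by
    apply MvPolynomial.algHom_ext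
    intro i
    simp only [AlgHom.comp_apply, aeval_X, rename_X, map_add, map_mul, map_sum, rename_C]
    rw [Equiv.sum_comp e (fun j => (X j : MvPolynomial (Fin n) R))]
  have h2 := AlgHom.congr_fun key φ
  simp only [AlgHom.comp_apply] at h2
  rw [h2, hφ e]

end Aux

/-- The localization `ℤ_{(p)}` of the integers at the prime ideal `(p)`. -/
abbrev ZpLocalization (p : ℕ) (hp : (Ideal.span {(p : ℤ)}).IsPrime) : Type :=
  @Localization.AtPrime ℤ _ (Ideal.span {(p : ℤ)}) hp

/-- For `p ∤ n+1`, the endomorphism `f` of `ℤ_{(p)}[x₁,…,xₙ]` given by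
`f(xᵢ) = xᵢ + c₁` (where `c₁ = x₁ + ⋯ + xₙ`) satisfies `f(c₁) = (n+1)·c₁`,
`f(cᵢ) ≡ cᵢ mod (c₁)` for `i > 1`, and restricts to a bijection of the subring
of symmetric polynomials `ℤ_{(p)}[c₁,…,cₙ]`. -/
theorem stmt4 (p n : ℕ) (hp : p.Prime) (hn : 1 ≤ n) (hpn : ¬ p ∣ (n + 1))
    (hprime : (Ideal.span {(p : ℤ)}).IsPrime) :
    (MvPolynomial.aeval
        (fun i : Fin n => MvPolynomial.X i + ∑ j : Fin n, MvPolynomial.X j)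
        (MvPolynomial.esymm (Fin n) (ZpLocalization p hprime) 1)
      = (n + 1) • MvPolynomial.esymm (Fin n) (ZpLocalization p hprime) 1) ∧
    (∀ i : ℕ, 1 < i → i ≤ n →
      MvPolynomial.aeval
          (fun i : Fin n => MvPolynomial.X i + ∑ j : Fin n, MvPolynomial.X j)
          (MvPolynomial.esymm (Fin n) (ZpLocalization p hprime) i)
        - MvPolynomial.esymm (Fin n) (ZpLocalization p hprime) i
        ∈ Ideal.span {MvPolynomial.esymm (Fin n) (ZpLocalization p hprime) 1}) ∧
    Set.BijOn
      (MvPolynomial.aeval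
        (fun i : Fin n => MvPolynomial.X i + ∑ j : Fin n, MvPolynomial.X j))
      (Algebra.adjoin (ZpLocalization p hprime)
        ((fun i : ℕ => MvPolynomial.esymm (Fin n) (ZpLocalization p hprime) i) ''
          Set.Icc 1 n) : Set (MvPolynomial (Fin n) (ZpLocalization p hprime)))
      (Algebra.adjoin (ZpLocalization p hprime)
        ((fun i : ℕ => MvPolynomial.esymm (Fin n) (ZpLocalization p hprime) i) ''
          Set.Icc 1 n) : Set (MvPolynomial (Fin n) (ZpLocalization p hprime))) := by
  set R := ZpLocalization p hprime
  -- the unit n+1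
  have hu : IsUnit ((n : R) + 1) := by
    have hmem : ((n : ℤ) + 1) ∈ (Ideal.span {(p : ℤ)}).primeCompl := by
      show ((n : ℤ) + 1) ∉ Ideal.span {(p : ℤ)}
      intro hmem
      rw [Ideal.mem_span_singleton] at hmem
      exact hpn (by exact_mod_cast hmem)
    have := (IsLocalization.AtPrime.isUnit_to_map_iff R (Ideal.span {(p : ℤ)})
      ((n : ℤ) + 1)).2 hmem
    have heq : (algebraMap ℤ R) ((n : ℤ) + 1) = (n : R) + 1 := by push_cast; ring
    rwa [heq] at this
  obtain ⟨U, hU⟩ := hu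
  set w : R := -(↑U⁻¹ : R) with hw
  have hwv : (1 : R) + w + (n : R) * 1 * w = 0 := by
    have h1 : ((n : R) + 1) * w = -1 := by
      rw [hw, ← hU]
      rw [mul_neg, Units.mul_inv]
    have : (1 : R) + w + (n : R) * 1 * w = 1 + ((n : R) + 1) * w := by ring
    rw [this, h1]; ring
  have hwv' : w + (1 : R) + (n : R) * w * 1 = 0 := by
    rw [← hwv]; ring
  have hfun : (fun i : Fin n => (X i : MvPolynomial (Fin n) R) + ∑ j : Fin n, X j)
      = (fun i : Fin n => X i + C (1 : R) * ∑ j : Fin n, X j) := by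
    funext i; rw [map_one, one_mul]
  refine ⟨?_, ?_, ?_⟩
  · -- part 1
    rw [esymm_one, map_sum]
    simp only [aeval_X]
    rw [Finset.sum_add_distrib, Finset.sum_const, Finset.card_univ, Fintype.card_fin,
      add_comm, ← succ_nsmul]
  · -- part 2
    intro i _ _
    rw [esymm_one]
    exact aux_sub_mem _
  · -- part 3
    have hA : ∀ φ : MvPolynomial (Fin n) R,
        φ ∈ (Algebra.adjoin R ((fun i : ℕ => esymm (Fin n) R i) '' Set.Icc 1 n) :
          Set (MvPolynomial (Fin n) R)) ↔ φ.IsSymmetric := by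
      intro φ
      rw [SetLike.mem_coe, aux_adjoin_eq, mem_symmetricSubalgebra]
    set F : MvPolynomial (Fin n) R →ₐ[R] MvPolynomial (Fin n) R := aeval (fun i : Fin n => (X i : MvPolynomial (Fin n) R) + C (1 : R) * ∑ j : Fin n, X j)
    set H : MvPolynomial (Fin n) R →ₐ[R] MvPolynomial (Fin n) R := aeval (fun i : Fin n => (X i : MvPolynomial (Fin n) R) + C w * ∑ j : Fin n, X j)
    have hcomp1 : H.comp F = AlgHom.id R _ := aux_comp 1 w hwv
    have hcomp2 : F.comp H = AlgHom.id R _ := aux_comp w 1 hwv'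
    rw [hfun]
    refine Set.InvOn.bijOn (f' := H) ⟨?_, ?_⟩ ?_ ?_
    · intro x _
      exact AlgHom.congr_fun hcomp1 x
    · intro x _
      exact AlgHom.congr_fun hcomp2 x
    · intro x hx
      rw [hA] at hx ⊢
      exact aux_symm 1 hx
    · intro x hx
      rw [hA] at hx ⊢
      exact aux_symm w hx
end

section
/- Over ℤ/2, let R = ℤ/2[w₂, w₃] (deg w₂ = 2, deg w₃ = 3) and S = ℤ/2[w₁, w₂] (deg w_i = i), and let ψ : R → S be the algebra map with ψ(w₂) = w₂ + w₁² and ψ(w₃) = w₁w₂. Then ψ is injective. -/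
open MvPolynomial

noncomputable section Stmt18Aux

/-- Abbreviation for the polynomial ring `ℤ/2[X0, X1]`. -/
abbrev Stmt18.Rr := MvPolynomial (Fin 2) (ZMod 2)

/-- The cubic `Y^3 + X0·Y + X1` over `ℤ/2[X0, X1]`. -/
noncomputable def Stmt18.fcub : Polynomial Stmt18.Rr :=
  Polynomial.X ^ 3 + Polynomial.C (X 0) * Polynomial.X + Polynomial.C (X 1)

namespace Stmt18

lemma fcub_deg : fcub.degree = 3 := by
  unfold fcub
  compute_degree!

lemma two_eq_zero_T : (2 : AdjoinRoot fcub) = 0 := by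
  calc (2 : AdjoinRoot fcub) = algebraMap (ZMod 2) _ (2 : ZMod 2) := by
        rw [map_ofNat]
    _ = 0 := by rw [show (2 : ZMod 2) = 0 from rfl, map_zero]

lemma add_self_T (x : AdjoinRoot fcub) : x + x = 0 := by
  rw [← two_mul, two_eq_zero_T, zero_mul]

lemma root_rel :
    (AdjoinRoot.root fcub) ^ 3 + AdjoinRoot.of fcub (X 0) * AdjoinRoot.root fcub
      + AdjoinRoot.of fcub (X 1) = 0 := by
  have h : Polynomial.eval₂ (AdjoinRoot.of fcub) (AdjoinRoot.root fcub)
      (Polynomial.X ^ 3 + Polynomial.C (X 0) * Polynomial.X + Polynomial.C (X 1)) = 0 :=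
    AdjoinRoot.eval₂_root fcub
  simpa [Polynomial.eval₂_add, Polynomial.eval₂_mul, Polynomial.eval₂_pow] using h

lemma comp_eq :
    (MvPolynomial.aeval (fun i : Fin 2 => if i = 0 then AdjoinRoot.root fcub
        else AdjoinRoot.of fcub (X 0) + AdjoinRoot.root fcub ^ 2) :
      MvPolynomial (Fin 2) (ZMod 2) →ₐ[ZMod 2] AdjoinRoot fcub).comp
      (MvPolynomial.aeval (fun i : Fin 2 =>
        if i = 0 then (MvPolynomial.X 1 + MvPolynomial.X 0 ^ 2 : MvPolynomial (Fin 2) (ZMod 2))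
        else MvPolynomial.X 0 * MvPolynomial.X 1)) =
    IsScalarTower.toAlgHom (ZMod 2) Rr (AdjoinRoot fcub) := by
  apply MvPolynomial.algHom_ext
  intro i
  fin_cases i
  · simp
    rw [add_assoc, add_self_T, add_zero]
  · simp
    have h := root_rel
    have key : AdjoinRoot.root fcub *
          (AdjoinRoot.of fcub (X 0) + AdjoinRoot.root fcub ^ 2)
        + ((AdjoinRoot.root fcub) ^ 3 + AdjoinRoot.of fcub (X 0) * AdjoinRoot.root fcub
          + AdjoinRoot.of fcub (X 1))
        = AdjoinRoot.of fcub (X 1)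
          + (AdjoinRoot.of fcub (X 0) * AdjoinRoot.root fcub
            + AdjoinRoot.of fcub (X 0) * AdjoinRoot.root fcub)
          + ((AdjoinRoot.root fcub) ^ 3 + (AdjoinRoot.root fcub) ^ 3) := by
      ring
    rw [h, add_zero] at key
    rw [key, add_self_T, add_self_T, add_zero, add_zero]

end Stmt18

end Stmt18Aux

/-- The algebra map `ψ : ℤ/2[w₂,w₃] → ℤ/2[w₁,w₂]` with `ψ(w₂) = w₂ + w₁²` and
`ψ(w₃) = w₁w₂` is injective. (Here the domain is `MvPolynomial (Fin 2) (ℤ/2)`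
with variable `0` standing for `w₂` and variable `1` for `w₃`, and the codomain
has variable `0` standing for `w₁` and variable `1` for `w₂`.) -/
theorem stmt18 :
    Function.Injective
      (MvPolynomial.aeval (fun i : Fin 2 =>
          if i = 0 then
            (MvPolynomial.X 1 + MvPolynomial.X 0 ^ 2 :
              MvPolynomial (Fin 2) (ZMod 2))
          else MvPolynomial.X 0 * MvPolynomial.X 1) :
        MvPolynomial (Fin 2) (ZMod 2) →ₐ[ZMod 2] MvPolynomial (Fin 2) (ZMod 2)) := by
  intro p q hpq
  have hofinj : Function.Injective (AdjoinRoot.of Stmt18.fcub) := by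
    apply AdjoinRoot.of.injective_of_degree_ne_zero
    rw [Stmt18.fcub_deg]
    norm_num
  have hp := DFunLike.congr_fun Stmt18.comp_eq p
  have hq := DFunLike.congr_fun Stmt18.comp_eq q
  simp only [AlgHom.comp_apply, IsScalarTower.coe_toAlgHom'] at hp hq
  have h2 : algebraMap Stmt18.Rr (AdjoinRoot Stmt18.fcub) p
      = algebraMap Stmt18.Rr (AdjoinRoot Stmt18.fcub) q := by
    rw [← hp, ← hq, hpq]
  rw [AdjoinRoot.algebraMap_eq] at h2
  exact hofinj h2
end
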